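/- A topological space X is radial at a point x if and only if x admits a spoke system, i.e., a nonempty family (S_i)_{i∈I} of subspaces each containing the neighbourhood core N_x and well-based at x, such that the sets ⋃_{i∈I} U_i, with each U_i a neighbourhood of x in S_i, form a neighbourhood base at x in X. -/

import Mathlib

open Filter Topology Set

universe u v

/-- `X` is radial at `x`: every set with `x` in its closure contains a transfinite
sequence (an ordinal-indexed net, with nonempty domain) converging to `x`. -/
def RadialAt {X : Type u} [TopologicalSpace X] (x : X) : Prop :=
  ∀ A : Set X, x ∈ closure A →
    ∃ o : Ordinal.{u}, o ≠ 0 ∧ ∃ f : o.ToType → X,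
      (∀ a, f a ∈ A) ∧ Filter.Tendsto f Filter.atTop (nhds x)

/-- The neighbourhood core of `x`: the intersection of all neighbourhoods of `x`. -/
def NbhdCore {X : Type u} [TopologicalSpace X] (x : X) : Set X :=
  ⋂₀ {U | U ∈ nhds x}

/-- A set `U ⊆ S` is a neighbourhood of `x` in the subspace `S` iff `U ∈ 𝓝[S] x`.
`S` is well-based at `x` if `x` has a neighbourhood base in the subspace `S`
well-ordered by reverse inclusion. -/
def WellBasedWithin {X : Type u} [TopologicalSpace X] (x : X) (S : Set X) : Prop :=
  ∃ B : Set (Set X),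
    (∀ b ∈ B, b ⊆ S ∧ b ∈ nhdsWithin x S) ∧
    (∀ U, U ⊆ S → U ∈ nhdsWithin x S → ∃ b ∈ B, b ⊆ U) ∧
    IsChain (· ⊆ ·) B ∧ B.WellFoundedOn (fun a b => b ⊂ a)

/-- A spoke system for `x`: a nonempty family of subspaces, each containing the
neighbourhood core and well-based at `x`, such that the unions of subspace
neighbourhoods of `x` form a neighbourhood base at `x`. -/
def IsSpokeSystem {X : Type u} [TopologicalSpace X] {I : Type v} (x : X)
    (S : I → Set X) : Prop :=
  Nonempty I ∧
  (∀ i, NbhdCore x ⊆ S i) ∧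
  (∀ i, x ∈ S i) ∧
  (∀ i, WellBasedWithin x (S i)) ∧
  (∀ U : I → Set X, (∀ i, U i ⊆ S i ∧ U i ∈ nhdsWithin x (S i)) →
    (⋃ i, U i) ∈ nhds x) ∧
  (∀ V ∈ nhds x, ∃ U : I → Set X,
    (∀ i, U i ⊆ S i ∧ U i ∈ nhdsWithin x (S i)) ∧ (⋃ i, U i) ⊆ V)

/-- An independent spoke system: distinct spokes meet exactly in the
neighbourhood core. -/
def IsIndepSpokeSystem {X : Type u} [TopologicalSpace X] {I : Type v} (x : X)
    (S : I → Set X) : Prop :=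
  IsSpokeSystem x S ∧ ∀ i j : I, i ≠ j → S i ∩ S j = NbhdCore x

/-- `X` is strongly Fréchet at `x`. -/
def StronglyFrechetAt {X : Type u} [TopologicalSpace X] (x : X) : Prop :=
  ∀ A : ℕ → Set X, Antitone A → (∀ n, x ∈ closure (A n)) →
    ∃ u : ℕ → X, (∀ n, u n ∈ A n) ∧ Filter.Tendsto u Filter.atTop (nhds x)

/-- `X` is first-countable at `x`: `x` has a countable neighbourhood base. -/
def FirstCountableAt {X : Type u} [TopologicalSpace X] (x : X) : Prop :=
  ∃ B : Set (Set X), B.Countable ∧ (∀ b ∈ B, b ∈ nhds x) ∧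
    ∀ U ∈ nhds x, ∃ b ∈ B, b ⊆ U

/-!
Suppose `X` is radial at `x` and `x ∈ closure A`. If `A` meets `N_x`, the spoke `N_x` works.
Otherwise take a net `f` in `A` of least possible length `μ`; then `μ` is regular, and by
minimality together with pigeonhole no set of fewer than `cof μ` points of `A` accumulates at
`x`. Hence in `S = range f ∪ N_x` the tails `f '' [γ, μ) ∪ N_x` are relative neighbourhoods,
and they form a base well-ordered by reverse inclusion. So every set accumulating at `x` does so
inside some well-based spoke, which is exactly what makes unions of relative neighbourhoods of
all such spokes neighbourhoods of `x`. Conversely, given a spoke system and `x ∈ closure A`, the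
same equivalence yields a spoke inside which `A` accumulates, and picking a point of `A` in each
member of its well-ordered base gives a net indexed by the order type of the base.
-/

open Cardinal

variable {X : Type u} [TopologicalSpace X] {x : X} {A S : Set X}

lemma mem_nbhdCore {y : X} : y ∈ NbhdCore x ↔ ∀ U ∈ 𝓝 x, y ∈ U :=
  mem_sInter

lemma mem_nbhdCore_self : x ∈ NbhdCore x :=
  mem_nbhdCore.2 fun _ => mem_of_mem_nhds

lemma nbhdCore_subset_of_mem_nhdsWithin {U : Set X} (hU : U ∈ 𝓝[NbhdCore x] x) :
    NbhdCore x ⊆ U := by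
  obtain ⟨u, hu, huU⟩ := mem_nhdsWithin_iff_exists_mem_nhds_inter.1 hU
  exact fun y hy => huU ⟨mem_nbhdCore.1 hy u hu, hy⟩

lemma inter_nonempty_of_mem_closure_inter {U : Set X} (hA : x ∈ closure (S ∩ A))
    (hU : U ∈ 𝓝[S] x) : (U ∩ A).Nonempty := by
  obtain ⟨u, hu, huU⟩ := mem_nhdsWithin_iff_exists_mem_nhds_inter.1 hU
  obtain ⟨y, hyu, hyS, hyA⟩ := mem_closure_iff_nhds.1 hA u hu
  exact ⟨y, huU ⟨hyu, hyS⟩, hyA⟩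

lemma forall_iUnion_mem_nhds_iff {ι : Type*} (S : ι → Set X) :
    (∀ U : ι → Set X, (∀ i, U i ⊆ S i ∧ U i ∈ 𝓝[S i] x) → (⋃ i, U i) ∈ 𝓝 x) ↔
      ∀ A, x ∈ closure A → ∃ i, x ∈ closure (S i ∩ A) := by
  constructor
  · intro hU A hA
    by_contra! hS
    have hdiff : ∀ i, S i \ A ∈ 𝓝[S i] x := fun i =>
      mem_nhdsWithin_iff_exists_mem_nhds_inter.2 ⟨_, isClosed_closure.compl_mem_nhds (hS i),
        fun y ⟨hy, hyS⟩ => ⟨hyS, fun hyA => hy (subset_closure ⟨hyS, hyA⟩)⟩⟩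
    obtain ⟨y, hyU, hyA⟩ :=
      mem_closure_iff_nhds.1 hA _ (hU (fun i => S i \ A) fun i => ⟨sdiff_subset, hdiff i⟩)
    obtain ⟨i, -, hyi⟩ := mem_iUnion.1 hyU
    exact hyi hyA
  · intro hA U hU
    by_contra hW
    obtain ⟨i, hi⟩ := hA (⋃ i, U i)ᶜ (by rwa [closure_compl, mem_compl_iff,
      mem_interior_iff_mem_nhds])
    obtain ⟨y, hyU, hyW⟩ := inter_nonempty_of_mem_closure_inter hi (hU i).2
    exact hyW (mem_iUnion_of_mem i hyU)

lemma wellBasedWithin_of_antitone {α : Type*} [LinearOrder α] [WellFoundedLT α] {T : α → Set X}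
    (hT : Antitone T) (hTS : ∀ a, T a ⊆ S) (hTx : ∀ a, T a ∈ 𝓝[S] x)
    (hbase : ∀ U ∈ 𝓝[S] x, ∃ a, T a ⊆ U) : WellBasedWithin x S := by
  refine ⟨range T, ?_, ?_, hT.isChain_range, ?_⟩
  · rintro _ ⟨a, rfl⟩
    exact ⟨hTS a, hTx a⟩
  · intro U _ hU
    obtain ⟨a, ha⟩ := hbase U hU
    exact ⟨T a, mem_range_self a, ha⟩
  · refine wellFoundedOn_range.2 (Subrelation.wf (fun {a b} hab => ?_) wellFounded_lt)
    exact lt_of_not_ge fun hba => hab.not_subset (hT hba)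

lemma wellBasedWithin_nbhdCore : WellBasedWithin x (NbhdCore x) :=
  wellBasedWithin_of_antitone (T := fun _ : Unit => NbhdCore x) antitone_const
    (fun _ => subset_rfl) (fun _ => self_mem_nhdsWithin)
    fun _ hU => ⟨(), nbhdCore_subset_of_mem_nhdsWithin hU⟩

def HasNetOfLength (A : Set X) (x : X) (o : Ordinal.{u}) : Prop :=
  o ≠ 0 ∧ ∃ f : o.ToType → X, (∀ a, f a ∈ A) ∧ Tendsto f atTop (𝓝 x)

lemma HasNetOfLength.mono {B : Set X} {o : Ordinal.{u}} (h : HasNetOfLength A x o)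
    (hAB : A ⊆ B) : HasNetOfLength B x o :=
  let ⟨ho, f, hfA, hf⟩ := h
  ⟨ho, f, fun a => hAB (hfA a), hf⟩

lemma hasNetOfLength_type {α : Type u} (r : α → α → Prop) [IsWellOrder α r] [Nonempty α]
    {f : α → X} (hfA : ∀ a, f a ∈ A) (hf : ∀ V ∈ 𝓝 x, ∃ a, ∀ b, ¬ r b a → f b ∈ V) :
    HasNetOfLength A x (Ordinal.type r) := by
  obtain ⟨e⟩ := Ordinal.type_eq.1 (Ordinal.type_toType (Ordinal.type r))
  have : Nonempty (Ordinal.type r).ToType :=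
    Ordinal.nonempty_toType_iff.2 (Ordinal.type_ne_zero_of_nonempty r)
  refine ⟨Ordinal.type_ne_zero_of_nonempty r, f ∘ e, fun γ => hfA _, fun V hV => ?_⟩
  obtain ⟨a, ha⟩ := hf V hV
  refine eventually_atTop.2 ⟨e.symm a, fun γ hγ => ha _ fun h => hγ.not_gt ?_⟩
  rwa [← e.map_rel_iff, e.apply_symm_apply]

/-- A net can be restricted to a cofinal subset of order type `o.cof.ord`. -/
lemma HasNetOfLength.ord_cof {o : Ordinal.{u}} (h : HasNetOfLength A x o) :
    HasNetOfLength A x o.cof.ord := by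
  obtain ⟨ho, f, hfA, hf⟩ := h
  have : Nonempty o.ToType := Ordinal.nonempty_toType_iff.2 ho
  obtain ⟨C, hC, hCtype⟩ := Ordinal.exists_ord_cof_eq o.ToType
  rw [Ordinal.cof_toType] at hCtype
  have : Nonempty C := by
    obtain ⟨c, hc, -⟩ := hC (Classical.arbitrary o.ToType)
    exact ⟨⟨c, hc⟩⟩
  rw [← hCtype]
  refine hasNetOfLength_type _ (f := f ∘ Subtype.val) (fun c => hfA c) fun V hV => ?_
  obtain ⟨b, hb⟩ := eventually_atTop.1 (hf hV)
  obtain ⟨c, hc, hbc⟩ := hC b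
  exact ⟨⟨c, hc⟩, fun d hd => hb d (hbc.trans (not_lt.1 hd))⟩

/-- Takes the junk value `0` when `A` carries no net converging to `x`. -/
noncomputable def netLength (A : Set X) (x : X) : Ordinal.{u} :=
  sInf {o | HasNetOfLength A x o}

lemma netLength_le {o : Ordinal.{u}} (h : HasNetOfLength A x o) : netLength A x ≤ o :=
  csInf_le' h

lemma hasNetOfLength_netLength (h : ∃ o, HasNetOfLength A x o) :
    HasNetOfLength A x (netLength A x) :=
  csInf_mem h

lemma ord_cof_netLength (h : ∃ o, HasNetOfLength A x o) :
    (netLength A x).cof.ord = netLength A x :=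
  (Ordinal.ord_cof_le _).antisymm (netLength_le (hasNetOfLength_netLength h).ord_cof)

lemma card_eq_cof_of_ord_cof_eq {o : Ordinal.{u}} (ho : o.cof.ord = o) : o.card = o.cof := by
  rw [← ho, card_ord, ho]

lemma mk_Iio_lt_cof {o : Ordinal.{u}} (ho : o.cof.ord = o) (a : o.ToType) : #(Iio a) < o.cof := by
  have hcard := card_eq_cof_of_ord_cof_eq ho
  have := mk_Iio_lt a (by rw [mk_toType, hcard, ho, Ordinal.type_toType])
  rwa [mk_toType, hcard] at this

/-- By pigeonhole some value is taken cofinally often, so it lies in every neighbourhood of the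
limit. -/
lemma exists_mem_nbhdCore_of_mk_range_lt_cof {o : Ordinal.{u}} {g : o.ToType → X}
    (hg : Tendsto g atTop (𝓝 x)) (hcard : #(range g) < o.cof) : ∃ a, g a ∈ NbhdCore x := by
  by_contra! hcore
  have hleave : ∀ y : range g, ∃ b, ∀ a, b ≤ a → g a ≠ y := by
    rintro ⟨_, a, rfl⟩
    have : Nonempty o.ToType := ⟨a⟩
    obtain ⟨V, hV, haV⟩ : ∃ V ∈ 𝓝 x, g a ∉ V := by simpa [mem_nbhdCore] using hcore a
    obtain ⟨b, hb⟩ := eventually_atTop.1 (hg hV)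
    exact ⟨b, fun c hc h => haV (by simpa [h] using hb c hc)⟩
  choose leave hleave using hleave
  obtain ⟨b, hb⟩ := not_isCofinal_iff.1 fun h =>
    (Order.cof_le h).not_gt (mk_range_le.trans_lt (Ordinal.cof_toType o ▸ hcard))
  exact hleave ⟨g b, mem_range_self b⟩ b (hb _ (mem_range_self _)).le rfl

/-- Otherwise a minimal net in `Q` has regular length at least `netLength A x`, so it takes
fewer values than its cofinality, and one of them lies in the neighbourhood core. -/
lemma RadialAt.notMem_closure_of_mk_lt_cof (rad : RadialAt x) (hA : Disjoint A (NbhdCore x))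
    {Q : Set X} (hQA : Q ⊆ A) (hQ : #Q < (netLength A x).cof) : x ∉ closure Q := by
  intro hxQ
  have hnet := hasNetOfLength_netLength (rad Q hxQ)
  obtain ⟨-, g, hgQ, hg⟩ := id hnet
  have hcard : #(range g) < (netLength Q x).cof := calc
    #(range g) ≤ #Q := mk_le_mk_of_subset (range_subset_iff.2 hgQ)
    _ < (netLength A x).cof := hQ
    _ ≤ (netLength A x).card := Ordinal.cof_le_card _
    _ ≤ (netLength Q x).card := Ordinal.card_le_card (netLength_le (hnet.mono hQA))
    _ = (netLength Q x).cof := card_eq_cof_of_ord_cof_eq (ord_cof_netLength (rad Q hxQ))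
  obtain ⟨a, ha⟩ := exists_mem_nbhdCore_of_mk_range_lt_cof hg hcard
  exact hA.ne_of_mem (hQA (hgQ a)) ha rfl

/-- The spoke is the range of a minimal-length net `f`, together with the neighbourhood core;
its tails `f '' Ici γ` form a well-ordered base because every initial segment of `f` is too
short to accumulate at `x`. -/
lemma RadialAt.exists_wellBasedWithin_of_disjoint (rad : RadialAt x) (hA : x ∈ closure A)
    (hAc : Disjoint A (NbhdCore x)) :
    ∃ S, NbhdCore x ⊆ S ∧ x ∈ S ∧ WellBasedWithin x S ∧ x ∈ closure (S ∩ A) := by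
  obtain ⟨hμ, f, hfA, hf⟩ := hasNetOfLength_netLength (rad A hA)
  have : Nonempty (netLength A x).ToType := Ordinal.nonempty_toType_iff.2 hμ
  refine ⟨range f ∪ NbhdCore x, subset_union_right, Or.inr mem_nbhdCore_self, ?_,
    mem_closure_of_tendsto hf (.of_forall fun γ => ⟨Or.inl (mem_range_self γ), hfA γ⟩)⟩
  refine wellBasedWithin_of_antitone (T := fun γ => f '' Ici γ ∪ NbhdCore x)
    (fun γ δ h => union_subset_union_left _ (image_mono (Ici_subset_Ici.2 h)))
    (fun γ => union_subset_union_left _ (image_subset_range _ _)) (fun γ => ?_) fun U hU => ?_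
  · have hshort : x ∉ closure (f '' Iio γ) :=
      rad.notMem_closure_of_mk_lt_cof hAc (image_subset_iff.2 fun δ _ => hfA δ)
        (mk_image_le.trans_lt (mk_Iio_lt_cof (ord_cof_netLength (rad A hA)) γ))
    refine mem_nhdsWithin_iff_exists_mem_nhds_inter.2
      ⟨_, isClosed_closure.compl_mem_nhds hshort, ?_⟩
    rintro y ⟨hy, ⟨δ, rfl⟩ | hy'⟩
    · exact Or.inl ⟨δ, (not_lt.1 fun hδ => hy (subset_closure ⟨δ, hδ, rfl⟩) : γ ≤ δ), rfl⟩
    · exact Or.inr hy'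
  · obtain ⟨u, hu, huU⟩ := mem_nhdsWithin_iff_exists_mem_nhds_inter.1 hU
    obtain ⟨b, hb⟩ := eventually_atTop.1 (hf hu)
    refine ⟨b, ?_⟩
    rintro y (⟨δ, hδ, rfl⟩ | hy)
    · exact huU ⟨hb δ hδ, Or.inl (mem_range_self δ)⟩
    · exact huU ⟨mem_nbhdCore.1 hy u hu, Or.inr hy⟩

lemma RadialAt.exists_wellBasedWithin (rad : RadialAt x) (hA : x ∈ closure A) :
    ∃ S, NbhdCore x ⊆ S ∧ x ∈ S ∧ WellBasedWithin x S ∧ x ∈ closure (S ∩ A) := by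
  by_cases hAc : Disjoint A (NbhdCore x)
  · exact rad.exists_wellBasedWithin_of_disjoint hA hAc
  · obtain ⟨a, haA, ha⟩ := not_disjoint_iff.1 hAc
    exact ⟨NbhdCore x, subset_rfl, mem_nbhdCore_self, wellBasedWithin_nbhdCore,
      mem_closure_iff_nhds.2 fun U hU => ⟨a, mem_nbhdCore.1 ha U hU, ha, haA⟩⟩

lemma WellBasedWithin.exists_hasNetOfLength (hS : WellBasedWithin x S)
    (hA : x ∈ closure (S ∩ A)) : ∃ o, HasNetOfLength A x o := by
  obtain ⟨B, hBS, hbase, hchain, hwf⟩ := hS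
  have : IsWellOrder B fun a b => (b : Set X) ⊂ a :=
    { wf := hwf
      trichotomous := fun a b hab hba => Subtype.ext <| by
        by_contra hne
        rcases hchain a.2 b.2 hne with h | h
        · exact hba (h.ssubset_of_ne hne)
        · exact hab (h.ssubset_of_ne (Ne.symm hne)) }
  have : Nonempty B := by
    obtain ⟨b, hb, -⟩ := hbase S subset_rfl self_mem_nhdsWithin
    exact ⟨⟨b, hb⟩⟩
  choose p hp using fun b : B => inter_nonempty_of_mem_closure_inter hA (hBS b b.2).2
  refine ⟨_, hasNetOfLength_type (fun a b : B => (b : Set X) ⊂ a) (fun b => (hp b).2)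
    fun V hV => ?_⟩
  obtain ⟨b, hbB, hbV⟩ := hbase (S ∩ V) inter_subset_left (inter_mem_nhdsWithin S hV)
  refine ⟨⟨b, hbB⟩, fun c hc => (hbV ?_).2⟩
  rcases trichotomous_of (fun a b : B => (b : Set X) ⊂ a) c ⟨b, hbB⟩ with h | rfl | h
  · exact absurd h hc
  · exact (hp ⟨b, hbB⟩).1
  · exact h.subset (hp c).1

/-- Theorem 4.1: `X` is radial at `x` if and only if `x` admits a spoke system. -/
theorem stmt_13 {X : Type u} [TopologicalSpace X] (x : X) :
    RadialAt x ↔ ∃ (I : Type u) (S : I → Set X), IsSpokeSystem x S := by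
  constructor
  · intro rad
    obtain ⟨S₀, hS₀⟩ := rad.exists_wellBasedWithin (A := univ) (by simp)
    refine ⟨{S : Set X // NbhdCore x ⊆ S ∧ x ∈ S ∧ WellBasedWithin x S}, Subtype.val,
      ⟨⟨S₀, hS₀.1, hS₀.2.1, hS₀.2.2.1⟩⟩, fun i => i.2.1, fun i => i.2.2.1, fun i => i.2.2.2,
      (forall_iUnion_mem_nhds_iff _).2 fun A hA => ?_, fun V hV => ?_⟩
    · obtain ⟨S, hcore, hx, hwb, hSA⟩ := rad.exists_wellBasedWithin hA
      exact ⟨⟨S, hcore, hx, hwb⟩, hSA⟩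
    · exact ⟨fun i => i.1 ∩ V, fun i => ⟨inter_subset_left, inter_mem_nhdsWithin _ hV⟩,
        iUnion_subset fun _ => inter_subset_right⟩
  · rintro ⟨I, S, -, -, -, hwb, hunion, -⟩ A hA
    obtain ⟨i, hi⟩ := (forall_iUnion_mem_nhds_iff S).1 hunion A hA
    exact (hwb i).exists_hasNetOfLength hi
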